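/- Every set of 5 points in general position in the plane contains a subset of 4 points in convex position. -/

import Mathlib

noncomputable section

/-- Points of the plane. -/
abbrev Pl := ℝ × ℝ

/-- `P` is in general position: no three (distinct) points of `P` are collinear. -/
def GenPos (P : Set Pl) : Prop :=
  ∀ a ∈ P, ∀ b ∈ P, ∀ c ∈ P, a ≠ b → a ≠ c → b ≠ c →
    ¬ Collinear ℝ ({a, b, c} : Set Pl)

/-- The set of all closed straight-line segments with (distinct) endpoints in `P`. -/
def Segs (P : Set Pl) : Set (Set Pl) :=
  {s | ∃ a ∈ P, ∃ b ∈ P, a ≠ b ∧ s = segment ℝ a b}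

/-- The edge disjointness graph of `P`: vertices are the segments of `P`,
two of them adjacent iff they are disjoint. -/
def DisjGraph (P : Set Pl) : SimpleGraph ↥(Segs P) where
  Adj s t := Disjoint (s : Set Pl) (t : Set Pl)
  symm := ⟨fun _ _ h => h.symm⟩
  loopless := ⟨by
    rintro ⟨s, a, ha, b, hb, hab, rfl⟩ h
    exact (Set.not_disjoint_iff.2
      ⟨a, left_mem_segment ℝ a b, left_mem_segment ℝ a b⟩) h⟩

/-- An independent set of vertices: pairwise non-adjacent. -/
def IsIndepSet {V : Type*} (G : SimpleGraph V) (s : Set V) : Prop :=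
  s.Pairwise fun a b => ¬ G.Adj a b

/-- Twice the signed area of the triangle `a b c`; its sign is the orientation. -/
def det3 (a b c : Pl) : ℝ :=
  (b.1 - a.1) * (c.2 - a.2) - (b.2 - a.2) * (c.1 - a.1)

/-- `p 0, …, p (n-1)` are in convex position, appearing in this
(counterclockwise) cyclic order on their convex hull. -/
def ConvexCyclic {n : ℕ} (p : Fin n → Pl) : Prop :=
  ∀ i j k : Fin n, i < j → j < k → 0 < det3 (p i) (p j) (p k)

/-- `P` is in convex position: every point of `P` is a vertex of the convex hull. -/
def ConvexPos (P : Set Pl) : Prop :=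
  ∀ x ∈ P, x ∉ convexHull ℝ (P \ {x})

/-- `P` and `Q` have the same order type. -/
def SameOrderType (P Q : Set Pl) : Prop :=
  ∃ γ : Pl → Pl, Set.BijOn γ P Q ∧
    ∀ a ∈ P, ∀ b ∈ P, ∀ c ∈ P,
      Real.sign (det3 a b c) = Real.sign (det3 (γ a) (γ b) (γ c))

/-- A thrackle of `P`: a set of segments of `P`, any two of which intersect. -/
def IsThrackle (P : Set Pl) (T : Set (Set Pl)) : Prop :=
  T ⊆ Segs P ∧ ∀ s ∈ T, ∀ t ∈ T, s ≠ t → ¬ Disjoint s t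

end

/-!
Call a point of `P` interior if it lies in the convex hull of the other four. If at most one
point is interior, any four non-interior points are in convex position. Otherwise let `d ≠ e`
be interior and `a, b, c` the remaining points. Each of `d, e` lies in the hull of the other
and the triangle `abc`, hence both lie in the triangle. The line `de` misses `a, b, c`, so two
of them, say `a` and `b`, are strictly on the same side of it. Then `a, b, d, e` are in convex
position: `a` and `b` are vertices of a triangle containing the other three points, and the
triangle `abe` meets the line `de` only at `e` (and symmetrically for `abd`).
-/

section ConvexHull

variable {E : Type*} [AddCommGroup E] [Module ℝ E] {s t : Set E} {a b : E}

theorem convex_convexHull_sdiff_singleton (ha : a ∉ convexHull ℝ (s \ {a})) :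
    Convex ℝ (convexHull ℝ s \ {a}) := by
  rcases (s \ {a}).eq_empty_or_nonempty with hs | hs
  · have hsa : s ⊆ {a} := Set.sdiff_eq_empty.1 hs
    rw [Set.sdiff_eq_empty.2 ((convexHull_mono hsa).trans (convexHull_singleton a).subset)]
    exact convex_empty
  have hjoin : convexHull ℝ s ⊆ ⋃ z ∈ convexHull ℝ (s \ {a}), segment ℝ a z := by
    rw [← convexJoin_singleton_left, ← convexHull_insert hs]
    exact convexHull_mono (Set.subset_insert_sdiff_singleton a s)
  rintro x ⟨hx, hxa⟩ y ⟨hy, hya⟩ α β hα hβ hαβ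
  refine ⟨convex_convexHull ℝ s hx hy hα hβ hαβ, fun h => ha ?_⟩
  -- `x` and `y` lie on segments from `a` to points `x'`, `y'` of `convexHull ℝ (s \ {a})`, so a
  -- combination of them equal to `a` exhibits `a` as a convex combination of `x'` and `y'`
  obtain ⟨x', hx', σ', σ, hσ', hσ, hσσ, rfl⟩ := Set.mem_iUnion₂.1 (hjoin hx)
  obtain ⟨y', hy', τ', τ, hτ', hτ, hττ, rfl⟩ := Set.mem_iUnion₂.1 (hjoin hy)
  obtain rfl : σ' = 1 - σ := by linarith
  obtain rfl : τ' = 1 - τ := by linarith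
  obtain rfl : α = 1 - β := by linarith
  have hσ0 : σ ≠ 0 := by rintro rfl; exact hxa (by simp)
  have hτ0 : τ ≠ 0 := by rintro rfl; exact hya (by simp)
  have hsum : ((1 - β) * σ) • x' + (β * τ) • y' = ((1 - β) * σ + β * τ) • a := by
    linear_combination (norm := module) Set.mem_singleton_iff.1 h
  set w := (1 - β) * σ + β * τ
  have hw : 0 < w := by
    rcases hβ.lt_or_eq with hβ | rfl
    · nlinarith [mul_pos hβ (lt_of_le_of_ne hτ (Ne.symm hτ0)), mul_nonneg hα hσ]
    · simpa [w] using lt_of_le_of_ne hσ (Ne.symm hσ0)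
  have hmem : ((1 - β) * σ / w) • x' + (β * τ / w) • y' ∈ convexHull ℝ (s \ {a}) :=
    convex_convexHull ℝ _ hx' hy' (by positivity) (by positivity)
      (by rw [← add_div, div_self hw.ne'])
  rwa [show ((1 - β) * σ / w) • x' + (β * τ / w) • y' = w⁻¹ • (((1 - β) * σ) • x' + (β * τ) • y')
    by module, hsum, inv_smul_smul₀ hw.ne'] at hmem

theorem notMem_convexHull_of_subset (ha : a ∉ convexHull ℝ (s \ {a}))
    (ht : t ⊆ convexHull ℝ s) (hat : a ∉ t) : a ∉ convexHull ℝ t := fun h =>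
  (convexHull_min (Set.subset_sdiff_singleton ht hat)
    (convex_convexHull_sdiff_singleton ha) h).2 rfl

theorem mem_convexHull_of_mem_convexHull_insert (hab : a ≠ b)
    (ha : a ∈ convexHull ℝ (insert b s)) (hb : b ∈ convexHull ℝ (insert a s)) :
    a ∈ convexHull ℝ s := by
  by_contra has
  refine notMem_convexHull_of_subset (s := insert a s) ?_ ?_ ?_ ha
  · exact fun h => has (convexHull_mono (by simp) h)
  · exact Set.insert_subset hb ((Set.subset_insert a s).trans (subset_convexHull ℝ _))
  · rintro (h | h)
    exacts [hab h, has (subset_convexHull ℝ s h)]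

end ConvexHull

theorem det3_convexCombination (u v a b c : Pl) {l₁ l₂ l₃ : ℝ} (h : l₁ + l₂ + l₃ = 1) :
    det3 u v (l₁ • a + l₂ • b + l₃ • c) =
      l₁ * det3 u v a + l₂ * det3 u v b + l₃ * det3 u v c := by
  obtain rfl : l₃ = 1 - l₁ - l₂ := by linarith
  simp only [det3, Prod.fst_add, Prod.snd_add, Prod.smul_fst, Prod.smul_snd, smul_eq_mul]
  ring

theorem collinear_of_det3_eq_zero {a b c : Pl} (h : det3 a b c = 0) :
    Collinear ℝ ({a, b, c} : Set Pl) := by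
  rcases eq_or_ne a b with rfl | hab
  · simpa using collinear_pair ℝ a c
  have hn : (b.1 - a.1) ^ 2 + (b.2 - a.2) ^ 2 ≠ 0 := by
    contrapose! hab
    ext <;> nlinarith [sq_nonneg (b.1 - a.1), sq_nonneg (b.2 - a.2)]
  rw [collinear_iff_of_mem (Set.mem_insert a _)]
  refine ⟨b - a, ?_⟩
  simp only [Set.mem_insert_iff, Set.mem_singleton_iff, forall_eq_or_imp, forall_eq]
  -- the coefficient of the orthogonal projection of `c - a` onto `b - a`
  refine ⟨⟨0, by simp⟩, ⟨1, by simp⟩, ⟨((c.1 - a.1) * (b.1 - a.1) + (c.2 - a.2) * (b.2 - a.2)) /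
    ((b.1 - a.1) ^ 2 + (b.2 - a.2) ^ 2), ?_⟩⟩
  simp only [det3] at h
  ext <;> simp <;> field_simp
  · linear_combination -(b.2 - a.2) * h
  · linear_combination (b.1 - a.1) * h

theorem GenPos.det3_ne_zero {P : Set Pl} (hP : GenPos P) {a b c : Pl} (ha : a ∈ P) (hb : b ∈ P)
    (hc : c ∈ P) (hab : a ≠ b) (hac : a ≠ c) (hbc : b ≠ c) : det3 a b c ≠ 0 :=
  fun h => hP a ha b hb c hc hab hac hbc (collinear_of_det3_eq_zero h)

theorem mem_convexHull_triple {a b c x : Pl} (h : x ∈ convexHull ℝ ({a, b, c} : Set Pl)) :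
    ∃ l₁ l₂ l₃ : ℝ, 0 ≤ l₁ ∧ 0 ≤ l₂ ∧ 0 ≤ l₃ ∧ l₁ + l₂ + l₃ = 1 ∧
      x = l₁ • a + l₂ • b + l₃ • c := by
  rw [convexHull_insert (Set.insert_nonempty b {c}), convexHull_pair,
    convexJoin_singleton_left] at h
  obtain ⟨z, ⟨u, v, hu, hv, huv, rfl⟩, p, q, hp, hq, hpq, rfl⟩ := Set.mem_iUnion₂.1 h
  exact ⟨p, q * u, q * v, hp, by positivity, by positivity, by linear_combination q * huv + hpq,
    by module⟩

theorem notMem_convexHull_of_det3_mul_pos {a b d e : Pl} (hde : d ≠ e)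
    (h : 0 < det3 d e a * det3 d e b) : d ∉ convexHull ℝ ({a, b, e} : Set Pl) := by
  intro hd
  obtain ⟨l₁, l₂, l₃, h₁, h₂, h₃, hl, hd⟩ := mem_convexHull_triple hd
  have h0 : l₁ * det3 d e a + l₂ * det3 d e b = 0 := by
    have := det3_convexCombination d e a b e hl
    rw [← hd] at this
    simp only [det3] at this ⊢
    linarith
  have hA := left_ne_zero_of_mul h.ne'
  have hsq : l₁ * (det3 d e a * det3 d e a) + l₂ * (det3 d e a * det3 d e b) = 0 := by
    linear_combination det3 d e a * h0
  obtain ⟨hl₁, hl₂⟩ := (add_eq_zero_iff_of_nonneg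
    (mul_nonneg h₁ (mul_self_nonneg _)) (mul_nonneg h₂ h.le)).1 hsq
  rw [mul_eq_zero, or_iff_left (mul_self_ne_zero.2 hA)] at hl₁
  rw [mul_eq_zero, or_iff_left h.ne'] at hl₂
  obtain rfl : l₃ = 1 := by linarith
  exact hde (by simp [hd, hl₁, hl₂])

theorem GenPos.notMem_convexHull_pair {P : Set Pl} (hP : GenPos P) {a b c : Pl} (ha : a ∈ P)
    (hb : b ∈ P) (hc : c ∈ P) (hab : a ≠ b) (hac : a ≠ c) (hbc : b ≠ c) :
    a ∉ convexHull ℝ ({b, c} : Set Pl) := by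
  rw [convexHull_pair]
  intro h
  refine hP a ha b hb c hc hab hac hbc ?_
  rw [Set.insert_comm]
  exact (mem_segment_iff_wbtw.1 h).collinear

theorem GenPos.convexPos_of_card_eq_three {P T : Finset Pl} (hP : GenPos ↑P) (hTP : T ⊆ P)
    (hT : T.card = 3) : ConvexPos ↑T := by
  obtain ⟨a, b, c, hab, hac, hbc, rfl⟩ := Finset.card_eq_three.1 hT
  have ha : a ∈ (P : Set Pl) := hTP (by simp)
  have hb : b ∈ (P : Set Pl) := hTP (by simp)
  have hc : c ∈ (P : Set Pl) := hTP (by simp)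
  push_cast
  rintro x (rfl | rfl | rfl) <;> refine fun h => ?_
  · exact hP.notMem_convexHull_pair ha hb hc hab hac hbc (convexHull_mono (by grind) h)
  · exact hP.notMem_convexHull_pair hb ha hc hab.symm hbc hac (convexHull_mono (by grind) h)
  · exact hP.notMem_convexHull_pair hc ha hb hac.symm hbc.symm hab (convexHull_mono (by grind) h)

theorem Finset.exists_ne_mul_pos_of_two_lt_card {α : Type*} {T : Finset α} (hT : 2 < T.card)
    {f : α → ℝ} (hf : ∀ x ∈ T, f x ≠ 0) : ∃ x ∈ T, ∃ y ∈ T, x ≠ y ∧ 0 < f x * f y := by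
  obtain ⟨x, hx, y, hy, hxy, hsign⟩ := Finset.exists_ne_map_eq_of_card_lt_of_maps_to
    (t := (Finset.univ : Finset Bool)) (f := fun z => decide (0 < f z)) (by simpa using hT)
    (fun _ _ => Finset.mem_coe.2 (Finset.mem_univ _))
  refine ⟨x, hx, y, hy, hxy, ?_⟩
  simp only [decide_eq_decide] at hsign
  rcases (hf x hx).lt_or_gt with hx0 | hx0
  · have hy0 : f y < 0 := (hf y hy).lt_of_le (le_of_not_gt fun hy0 => hx0.not_gt (hsign.2 hy0))
    exact mul_pos_of_neg_of_neg hx0 hy0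
  · exact mul_pos hx0 (hsign.1 hx0)

theorem convexPos_of_forall_notMem_convexHull {P Q : Set Pl} (hQP : Q ⊆ P)
    (hQ : ∀ x ∈ Q, x ∉ convexHull ℝ (P \ {x})) : ConvexPos Q := fun x hx h =>
  hQ x hx (convexHull_mono (Set.sdiff_subset_sdiff_left hQP) h)

theorem ConvexPos.convexPos_of_mem_convexHull {T : Set Pl} (hT : ConvexPos T) {x y d e : Pl}
    (hx : x ∈ T) (hy : y ∈ T) (hxy : x ≠ y) (hd : d ∈ convexHull ℝ T) (he : e ∈ convexHull ℝ T)
    (hdT : d ∉ T) (heT : e ∉ T) (hde : d ≠ e) (hside : 0 < det3 d e x * det3 d e y) :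
    ConvexPos {x, y, d, e} := by
  have hsub : ∀ z ∈ T, ({z, d, e} : Set Pl) ⊆ convexHull ℝ T := fun z hz => by
    simp [Set.insert_subset_iff, subset_convexHull ℝ T hz, hd, he]
  have hside' : 0 < det3 e d x * det3 e d y := by
    convert hside using 1; simp only [det3]; ring
  rintro z (rfl | rfl | rfl | rfl) <;> refine fun h => ?_
  · exact notMem_convexHull_of_subset (hT z hx) (hsub y hy) (by grind)
      (convexHull_mono (by grind) h)
  · exact notMem_convexHull_of_subset (hT z hy) (hsub x hx) (by grind)
      (convexHull_mono (by grind) h)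
  · exact notMem_convexHull_of_det3_mul_pos hde hside (convexHull_mono (by grind) h)
  · exact notMem_convexHull_of_det3_mul_pos hde.symm hside' (convexHull_mono (by grind) h)

theorem exists_convexPos_of_mem_convexHull_erase {P : Finset Pl} (h5 : P.card = 5)
    (hP : GenPos ↑P) {d e : Pl} (hdP : d ∈ P) (heP : e ∈ P) (hde : d ≠ e)
    (hd : d ∈ convexHull ℝ ↑(P.erase d)) (he : e ∈ convexHull ℝ ↑(P.erase e)) :
    ∃ Q ⊆ P, Q.card = 4 ∧ ConvexPos ↑Q := by
  set T := (P.erase d).erase e with hT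
  have hmemT : ∀ z, z ∈ T ↔ z ≠ e ∧ z ≠ d ∧ z ∈ P := by simp [hT]
  have hT3 : T.card = 3 := by
    rw [Finset.card_erase_of_mem (by simp [hde.symm, heP]), Finset.card_erase_of_mem hdP, h5]
  have hPd : (↑(P.erase d) : Set Pl) = insert e ↑T := by ext; simp [hT]; grind
  have hPe : (↑(P.erase e) : Set Pl) = insert d ↑T := by ext; simp [hT]; grind
  rw [hPd] at hd
  rw [hPe] at he
  have hdT := mem_convexHull_of_mem_convexHull_insert hde hd he
  have heT := mem_convexHull_of_mem_convexHull_insert hde.symm he hd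
  obtain ⟨x, hx, y, hy, hxy, hside⟩ := Finset.exists_ne_mul_pos_of_two_lt_card (T := T)
    (f := det3 d e) (by omega) fun z hz => by
      obtain ⟨hze, hzd, hzP⟩ := (hmemT z).1 hz
      exact hP.det3_ne_zero hdP heP hzP hde hzd.symm hze.symm
  obtain ⟨hxe, hxd, hxP⟩ := (hmemT x).1 hx
  obtain ⟨hye, hyd, hyP⟩ := (hmemT y).1 hy
  refine ⟨{x, y, d, e}, ?_, ?_, ?_⟩
  · simp [Finset.insert_subset_iff, hxP, hyP, hdP, heP]
  · simp [Finset.card_insert_of_notMem, hxy, hxd, hxe, hyd, hye, hde]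
  · have hTP : T ⊆ P := (Finset.erase_subset _ _).trans (Finset.erase_subset _ _)
    push_cast
    exact (hP.convexPos_of_card_eq_three hTP hT3).convexPos_of_mem_convexHull hx hy hxy hdT heT
      (by simp [hmemT]) (by simp [hmemT]) hde hside

/-- Esther Klein: any 5 points in general position contain
4 points in convex position. -/
theorem stmt_13 (P : Finset Pl) (h5 : P.card = 5) (hgp : GenPos ↑P) :
    ∃ Q ⊆ P, Q.card = 4 ∧ ConvexPos ↑Q := by
  classical
  obtain ⟨I, hI⟩ : ∃ I, I = P.filter fun x => x ∈ convexHull ℝ ↑(P.erase x) := ⟨_, rfl⟩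
  by_cases hI2 : 1 < I.card
  · obtain ⟨d, hd, e, he, hde⟩ := Finset.one_lt_card.1 hI2
    rw [hI, Finset.mem_filter] at hd he
    exact exists_convexPos_of_mem_convexHull_erase h5 hgp hd.1 he.1 hde hd.2 he.2
  have h4 : 4 ≤ (P \ I).card := by
    have := Finset.card_sdiff_of_subset (hI ▸ Finset.filter_subset _ P : I ⊆ P)
    omega
  obtain ⟨Q, hQ, hQ4⟩ := Finset.exists_subset_card_eq h4
  refine ⟨Q, hQ.trans Finset.sdiff_subset, hQ4, convexPos_of_forall_notMem_convexHull (P := ↑P)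
    (fun x hx => (Finset.mem_sdiff.1 (hQ hx)).1) fun x hx h => ?_⟩
  obtain ⟨hxP, hxI⟩ := Finset.mem_sdiff.1 (hQ hx)
  rw [← Finset.coe_erase] at h
  exact hxI (hI ▸ Finset.mem_filter.2 ⟨hxP, h⟩)
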